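/- Let (B,+,·) be a finite two-sided skew brace such that the additive group (B,+) is solvable. Then the multiplicative group (B,·) is solvable. -/

import Mathlib

/-- A skew brace structure on a type `B` carrying both an additive group
structure `(B, +)` and a multiplicative group structure `(B, ·)`:
`a · (b + c) = a · b - a + a · c` for all `a b c`. -/
class SkewBrace (B : Type*) [AddGroup B] [Group B] : Prop where
  left_compat : ∀ a b c : B, a * (b + c) = a * b - a + a * c

/-- A two-sided skew brace additionally satisfies
`(a + b) · c = a · c - c + b · c` for all `a b c`. -/
class TwoSidedSkewBrace (B : Type*) [AddGroup B] [Group B] extends SkewBrace B : Prop where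
  right_compat : ∀ a b c : B, (a + b) * c = a * c - c + b * c

/-!
The additive subgroup `B ∗ B` generated by the elements `a ∗ b = -a + a * b - b` is a left
ideal, and `a * b ≡ a + b` modulo it, so `(B, ·)` is an extension of the sub-skew-brace `B ∗ B`
by a quotient of `(B, +)`. By induction on `|B|` it remains to see that `B ∗ B = B` forces
`B = 0`. The additive commutator subgroup is invariant under every `λ_a` and `ρ_c`, and modulo
it `B` becomes a two-sided brace, that is, a radical ring under `∗` in which the group inverse
`a⁻¹` is a quasi-inverse of `a`. A finite radical ring `R` with `R ∗ R = R` is zero: a minimal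
left ideal `A` with `R ∗ A ≠ 0` contains some `a` with `R ∗ a ≠ 0`, minimality gives
`R ∗ a = A ∋ a`, and `a = x ∗ a` forces `a = 0`. So `(B, +)` equals its commutator subgroup,
and being solvable it is trivial.
-/

theorem map_addCommutator_le {A : Type*} [AddGroup A] (f : A →+ A) :
    (addCommutator A).map f ≤ addCommutator A := by
  rw [map_addCommutator_eq]
  exact AddSubgroup.addCommutator_mono le_top le_top

instance QuotientAddGroup.addCommGroupAddCommutator {A : Type*} [AddGroup A] :
    AddCommGroup (A ⧸ addCommutator A) where
  __ := QuotientAddGroup.Quotient.addGroup _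
  add_comm x y := by
    induction x using QuotientAddGroup.induction_on with | H a =>
    induction y using QuotientAddGroup.induction_on with | H b =>
    rw [← QuotientAddGroup.mk_add, ← QuotientAddGroup.mk_add, QuotientAddGroup.eq,
      addCommutator_def]
    simpa [addCommutatorElement_def, add_assoc] using AddSubgroup.addCommutator_mem_addCommutator
      (AddSubgroup.mem_top (-b)) (AddSubgroup.mem_top (-a))

theorem toSubgroup_addCommutator (A : Type*) [AddGroup A] :
    AddSubgroup.toSubgroup (addCommutator A) = commutator (Multiplicative A) := by
  rw [addCommutator_eq_closure, AddSubgroup.toSubgroup_closure, commutator_eq_closure]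
  rfl

theorem subsingleton_of_addCommutator_eq_top {A : Type*} [AddGroup A]
    [Group.IsSolvable (Multiplicative A)] (h : addCommutator A = ⊤) : Subsingleton A := by
  refine not_nontrivial_iff_subsingleton.mp fun _ => ?_
  apply (Group.IsSolvable.commutator_lt_top_of_nontrivial (Multiplicative A)).ne
  rw [← toSubgroup_addCommutator, h, map_top]

namespace SkewBrace

def starMul {B : Type*} [AddGroup B] [Group B] (a b : B) : B := -a + a * b - b

local infixl:70 " ∗ " => starMul

def starClosure (B : Type*) [AddGroup B] [Group B] : AddSubgroup B :=
  AddSubgroup.closure {x | ∃ a b : B, a ∗ b = x}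

theorem starMul_mem_starClosure {B : Type*} [AddGroup B] [Group B] (a b : B) :
    a ∗ b ∈ starClosure B :=
  AddSubgroup.subset_closure ⟨a, b, rfl⟩

section Skew

variable {B : Type*} [AddGroup B] [Group B] [SkewBrace B]

theorem one_eq_zero : (1 : B) = 0 := by
  have h := left_compat (1 : B) 0 0
  simp only [add_zero, one_mul, zero_sub] at h
  exact neg_eq_zero.mp h.symm

def lambda (a : B) : B →+ B :=
  AddMonoidHom.mk' (fun b => -a + a * b) fun b c => by
    simp only [left_compat, sub_eq_add_neg, add_assoc]

theorem lambda_apply (a b : B) : lambda a b = -a + a * b := rfl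

theorem mul_eq_add_lambda (a b : B) : a * b = a + lambda a b :=
  (add_neg_cancel_left a (a * b)).symm

theorem lambda_mul (a b c : B) : lambda (a * b) c = lambda a (lambda b c) := by
  rw [lambda_apply b, map_add, map_neg, lambda_apply, lambda_apply, lambda_apply, mul_assoc]
  simp only [neg_add_rev, neg_neg, add_assoc, add_neg_cancel_left]

theorem inv_eq_lambda (a : B) : a⁻¹ = lambda a⁻¹ (-a) := by
  rw [map_neg, lambda_apply, inv_mul_cancel, one_eq_zero, add_zero, neg_neg]

theorem starMul_eq_lambda_sub (a b : B) : a ∗ b = lambda a b - b := rfl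

theorem mul_eq_add_starMul_add (a b : B) : a * b = a + a ∗ b + b := by
  rw [starMul_eq_lambda_sub, add_assoc, sub_add_cancel, mul_eq_add_lambda]

theorem lambda_starMul (a b c : B) : lambda a (b ∗ c) = (a * b) ∗ c - a ∗ c := by
  rw [starMul_eq_lambda_sub, map_sub, ← lambda_mul]
  simp only [starMul_eq_lambda_sub, sub_eq_add_neg, neg_add_rev, neg_neg, add_assoc,
    neg_add_cancel_left]

theorem add_starMul_sub (a b c : B) : b + a ∗ c - b = -(a ∗ b) + a ∗ (b + c) := by
  simp only [starMul_eq_lambda_sub, map_add, sub_eq_add_neg, neg_add_rev, neg_neg, add_assoc,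
    neg_add_cancel_left]

class IsLeftIdeal (S : AddSubgroup B) : Prop where
  lambda_mem (a : B) {x : B} : x ∈ S → lambda a x ∈ S

def IsLeftIdeal.toSubgroup (S : AddSubgroup B) [IsLeftIdeal S] : Subgroup B where
  carrier := S
  mul_mem' {a b} ha hb := by
    rw [SetLike.mem_coe, mul_eq_add_lambda]
    exact add_mem ha (IsLeftIdeal.lambda_mem a hb)
  one_mem' := by
    rw [SetLike.mem_coe, one_eq_zero]
    exact zero_mem S
  inv_mem' {a} ha := by
    rw [SetLike.mem_coe, inv_eq_lambda]
    exact IsLeftIdeal.lambda_mem _ (neg_mem ha)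

instance (S : AddSubgroup B) [IsLeftIdeal S] : Group S :=
  inferInstanceAs (Group (IsLeftIdeal.toSubgroup S))

instance (S : AddSubgroup B) [IsLeftIdeal S] : SkewBrace S :=
  ⟨fun a b c => Subtype.ext (left_compat a.1 b.1 c.1)⟩

def IsLeftIdeal.subtype (S : AddSubgroup B) [IsLeftIdeal S] : S →* B :=
  (IsLeftIdeal.toSubgroup S).subtype

instance : (starClosure B).Normal where
  conj_mem x hx g := by
    induction hx using AddSubgroup.closure_induction with
    | mem x hx =>
      obtain ⟨a, c, rfl⟩ := hx
      rw [← sub_eq_add_neg, add_starMul_sub]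
      exact add_mem (neg_mem (starMul_mem_starClosure a g)) (starMul_mem_starClosure a (g + c))
    | zero => simp
    | add x y _ _ hx hy => simpa [add_assoc] using add_mem hx hy
    | neg x _ hx => simpa [add_assoc] using neg_mem hx

instance : IsLeftIdeal (starClosure B) where
  lambda_mem a x hx := by
    have : starClosure B ≤ (starClosure B).comap (lambda a) := by
      refine (AddSubgroup.closure_le _).mpr ?_
      rintro _ ⟨b, c, rfl⟩
      rw [SetLike.mem_coe, AddSubgroup.mem_comap, lambda_starMul]
      exact sub_mem (starMul_mem_starClosure _ _) (starMul_mem_starClosure _ _)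
    exact this hx

def mulToQuotientStarClosure : B →* Multiplicative (B ⧸ starClosure B) where
  toFun a := Multiplicative.ofAdd (a : B ⧸ starClosure B)
  map_one' := by rw [one_eq_zero]; rfl
  map_mul' a b := by
    rw [mul_eq_add_starMul_add, QuotientAddGroup.mk_add, QuotientAddGroup.mk_add,
      (QuotientAddGroup.eq_zero_iff _).mpr (starMul_mem_starClosure a b), add_zero]
    rfl

theorem isSolvable_of_isSolvable_starClosure [Group.IsSolvable (Multiplicative B)]
    [Group.IsSolvable (starClosure B)] : Group.IsSolvable B := by
  have : Group.IsSolvable (Multiplicative (B ⧸ starClosure B)) :=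
    Group.isSolvable_of_surjective
      (f := AddMonoidHom.toMultiplicative (QuotientAddGroup.mk' (starClosure B)))
      (QuotientAddGroup.mk'_surjective (starClosure B))
  refine Group.isSolvable_of_ker_le_range (IsLeftIdeal.subtype (starClosure B))
    mulToQuotientStarClosure fun x hx => ⟨⟨x, ?_⟩, rfl⟩
  exact (QuotientAddGroup.eq_zero_iff x).mp hx

end Skew

section TwoSided

variable {B : Type*} [AddGroup B] [Group B] [TwoSidedSkewBrace B]

instance (S : AddSubgroup B) [IsLeftIdeal S] : TwoSidedSkewBrace S where
  right_compat a b c := Subtype.ext (TwoSidedSkewBrace.right_compat a.1 b.1 c.1)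

def rho (c : B) : B →+ B :=
  AddMonoidHom.mk' (fun a => a * c - c) fun a b => by
    simp only [TwoSidedSkewBrace.right_compat, sub_eq_add_neg, add_assoc]

theorem rho_apply (c a : B) : rho c a = a * c - c := rfl

class IsIdeal (I : AddSubgroup B) : Prop extends IsLeftIdeal I where
  rho_mem (c : B) {x : B} : x ∈ I → rho c x ∈ I

instance isIdeal_addCommutator : IsIdeal (addCommutator B) where
  lambda_mem a _ hx := map_addCommutator_le (lambda a) (AddSubgroup.mem_map_of_mem _ hx)
  rho_mem c _ hx := map_addCommutator_le (rho c) (AddSubgroup.mem_map_of_mem _ hx)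

variable (I : AddSubgroup B) [I.Normal] [IsIdeal I]

theorem neg_mul_add_add_mul_add_mem (a b : B) {t u : B} (ht : t ∈ I) (hu : u ∈ I) :
    -(a * b) + (a + t) * (b + u) ∈ I := by
  have key : (a + t) * (b + u) = a * b + (lambda a u + (-(b + u) + rho (b + u) t + (b + u))) := by
    rw [TwoSidedSkewBrace.right_compat, left_compat, lambda_apply, rho_apply]
    simp only [sub_eq_add_neg, add_assoc, neg_add_cancel, add_zero]
  rw [key, neg_add_cancel_left]
  refine add_mem (IsLeftIdeal.lambda_mem a hu) ?_
  simpa using ‹I.Normal›.conj_mem _ (IsIdeal.rho_mem (b + u) ht) (-(b + u))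

def idealCon : Con B where
  toSetoid := QuotientAddGroup.leftRel I
  mul' {a _ b _} ha hb := by
    rw [QuotientAddGroup.leftRel_apply] at *
    simpa using neg_mul_add_add_mul_add_mem I a b ha hb

instance : Group (B ⧸ I) := inferInstanceAs (Group (idealCon I).Quotient)

theorem mk_mul (a b : B) : ((a * b : B) : B ⧸ I) = a * b := by rfl

instance : TwoSidedSkewBrace (B ⧸ I) where
  left_compat x y z := by
    induction x using QuotientAddGroup.induction_on
    induction y using QuotientAddGroup.induction_on
    induction z using QuotientAddGroup.induction_on
    simp only [← mk_mul, ← QuotientAddGroup.mk_add, ← QuotientAddGroup.mk_sub, left_compat]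
  right_compat x y z := by
    induction x using QuotientAddGroup.induction_on
    induction y using QuotientAddGroup.induction_on
    induction z using QuotientAddGroup.induction_on
    simp only [← mk_mul, ← QuotientAddGroup.mk_add, ← QuotientAddGroup.mk_sub,
      TwoSidedSkewBrace.right_compat]

theorem mk_starMul (a b : B) : ((a ∗ b : B) : B ⧸ I) = (a : B ⧸ I) ∗ b := by
  simp only [starMul, QuotientAddGroup.mk_sub, QuotientAddGroup.mk_add, QuotientAddGroup.mk_neg,
    mk_mul]

theorem starClosure_quotient_eq_top (h : starClosure B = ⊤) : starClosure (B ⧸ I) = ⊤ := by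
  rw [eq_top_iff, ← (QuotientAddGroup.mk' I).range_eq_top_of_surjective
    (QuotientAddGroup.mk'_surjective I), AddMonoidHom.range_eq_map, ← h, starClosure,
    AddMonoidHom.map_closure]
  refine AddSubgroup.closure_mono ?_
  rintro _ ⟨_, ⟨a, b, rfl⟩, rfl⟩
  exact ⟨a, b, (mk_starMul I a b).symm⟩

end TwoSided

section Brace

variable {Q : Type*} [AddCommGroup Q] [Group Q] [TwoSidedSkewBrace Q]

theorem starMul_add (a b c : Q) : a ∗ (b + c) = a ∗ b + a ∗ c := by
  have h := add_starMul_sub a b c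
  rw [add_sub_cancel_left, eq_neg_add_iff_add_eq] at h
  exact h.symm

theorem add_starMul (a b c : Q) : (a + b) ∗ c = a ∗ c + b ∗ c := by
  simp only [starMul, TwoSidedSkewBrace.right_compat]
  abel

def starMulLeft (a : Q) : Q →+ Q := AddMonoidHom.mk' (a ∗ ·) (starMul_add a)

def starMulRight (b : Q) : Q →+ Q := AddMonoidHom.mk' (· ∗ b) fun a c => add_starMul a c b

theorem starMul_assoc (a b c : Q) : a ∗ b ∗ c = a ∗ (b ∗ c) := by
  have h := mul_assoc a b c
  simp only [mul_eq_add_starMul_add, add_starMul, starMul_add] at h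
  rw [← sub_eq_zero] at h ⊢
  rw [← h]
  abel

theorem starMul_neg (a b : Q) : a ∗ -b = -(a ∗ b) := map_neg (starMulLeft a) b

theorem sub_starMul (a b c : Q) : (a - b) ∗ c = a ∗ c - b ∗ c := map_sub (starMulRight c) a b

theorem eq_zero_of_starMul_eq_self {x a : Q} (h : x ∗ a = a) : a = 0 := by
  set z := (-x)⁻¹
  have hz : z ∗ x = z - x := by
    have : z ∗ -x = x - z := by
      rw [starMul, inv_mul_cancel, one_eq_zero]
      abel
    rw [← neg_sub x z, ← this, starMul_neg, neg_neg]
  have : z ∗ a - a = z ∗ a := calc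
    z ∗ a - a = z ∗ a - x ∗ a := by rw [h]
    _ = (z - x) ∗ a := (sub_starMul z x a).symm
    _ = z ∗ (x ∗ a) := by rw [← hz, starMul_assoc]
    _ = z ∗ a := by rw [h]
  exact sub_eq_self.mp this

theorem starClosure_le_ker_starMulRight {a : Q} (ha : ∀ x y, x ∗ (y ∗ a) = 0) :
    starClosure Q ≤ (starMulRight a).ker := by
  refine (AddSubgroup.closure_le _).mpr ?_
  rintro _ ⟨x, y, rfl⟩
  exact (starMul_assoc x y a).trans (ha x y)

theorem starMul_eq_zero_of_starClosure_eq_top [Finite Q] (h : starClosure Q = ⊤) (x b : Q) :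
    x ∗ b = 0 := by
  by_contra hxb
  let P (A : AddSubgroup Q) : Prop :=
    (∀ x, ∀ b ∈ A, x ∗ b ∈ A) ∧ ∃ x, ∃ b ∈ A, x ∗ b ≠ 0
  obtain ⟨A, hA⟩ := exists_minimal_of_wellFoundedLT P
    ⟨⊤, fun _ _ _ => trivial, x, b, trivial, hxb⟩
  obtain ⟨hA_ideal, x, a, haA, hxa⟩ := hA.prop
  have hQa : P (starMulRight a).range := by
    refine ⟨?_, ?_⟩
    · rintro x _ ⟨y, rfl⟩
      exact ⟨x ∗ y, starMul_assoc x y a⟩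
    · by_contra! h0
      exact hxa (starClosure_le_ker_starMulRight (fun x y => h0 x (y ∗ a) ⟨y, rfl⟩)
        (h ▸ AddSubgroup.mem_top x))
  have hQaA : (starMulRight a).range ≤ A := by
    rintro _ ⟨y, rfl⟩
    exact hA_ideal y a haA
  obtain ⟨y, hy⟩ := hA.le_of_le hQa hQaA haA
  rw [eq_zero_of_starMul_eq_self hy] at hxa
  exact hxa (map_zero (starMulLeft x))

theorem subsingleton_of_starClosure_eq_top [Finite Q] (h : starClosure Q = ⊤) :
    Subsingleton Q := by
  have : starClosure Q = ⊥ := by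
    refine le_bot_iff.mp ((AddSubgroup.closure_le _).mpr ?_)
    rintro _ ⟨x, y, rfl⟩
    exact starMul_eq_zero_of_starClosure_eq_top h x y
  exact AddSubgroup.subsingleton_iff.mp (subsingleton_of_bot_eq_top (this.symm.trans h))

end Brace

theorem subsingleton_of_starClosure_eq_top_of_isSolvable {B : Type*} [AddGroup B] [Group B]
    [TwoSidedSkewBrace B] [Finite B] [Group.IsSolvable (Multiplicative B)]
    (h : starClosure B = ⊤) : Subsingleton B := by
  have : Subsingleton (B ⧸ addCommutator B) :=
    subsingleton_of_starClosure_eq_top (starClosure_quotient_eq_top _ h)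
  exact subsingleton_of_addCommutator_eq_top (QuotientAddGroup.subsingleton_iff.mp this)

end SkewBrace

open SkewBrace in
/-- Nasybullov's theorem: a finite two-sided skew brace whose additive group
`(B, +)` is solvable has solvable multiplicative group `(B, ·)`. -/
theorem solvable_mul_of_finite_twoSidedSkewBrace
    (B : Type*) [AddGroup B] [Group B] [TwoSidedSkewBrace B] [Finite B]
    (hadd : IsSolvable (Multiplicative B)) :
    IsSolvable B := by
  induction hn : Nat.card B using Nat.strong_induction_on generalizing B with
  | _ n ih =>
  have : Group.IsSolvable (Multiplicative B) := hadd
  rcases subsingleton_or_nontrivial B with _ | _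
  · exact (inferInstance : Group.IsSolvable B)
  have hlt : starClosure B < ⊤ := lt_top_iff_ne_top.mpr fun h =>
    not_subsingleton B (subsingleton_of_starClosure_eq_top_of_isSolvable h)
  obtain ⟨w, -, hw⟩ := SetLike.exists_of_lt hlt
  have : Group.IsSolvable (starClosure B) :=
    ih _ (hn ▸ Finite.card_subtype_lt hw) _ (Group.isSolvable_of_isSolvable_injective
      (f := AddMonoidHom.toMultiplicative (starClosure B).subtype) Subtype.val_injective) rfl
  exact isSolvable_of_isSolvable_starClosure
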